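/- For every integer n ≥ 4 and every integer k with |k| ≤ n^{2/3}, one has |b*_{k,n} − k²/n| < 2·n^{−1/3}. -/

import Mathlib

open Real

/-!
Put `x = k / n` and `F x = (1 + x) log (1 + x) + (1 - x) log (1 - x)`. Then
`b*_{k,n} - k² / n = n (F x - x²) - (log (1 + x) - log (1 - x)) / 2`, and both
`F x = ∑ x^(2j+2) / ((j+1)(2j+1))` and `log (1 + x) - log (1 - x) = ∑ 2 x^(2j+1) / (2j+1)`
are dominated by geometric series in `x²`: `0 ≤ F x - x² ≤ x⁴ / (6 (1 - x²))` and
`|log (1 + x) - log (1 - x)| ≤ 2 |x| / (1 - x²)`. With `t = n^(-1/3)` the hypothesis gives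
`|x| ≤ t` and `n t⁴ = t`, so the error is at most `(7/6) t / (1 - t²)`, which is `< 2 t`
because `n ≥ 4` forces `t² < 5/12`.
-/

noncomputable def bstar (n : ℕ) (k : ℤ) : ℝ :=
  (n : ℝ) * ((1 + ((k : ℝ) - 1 / 2) / n) * Real.log (1 + (k : ℝ) / n)
    + (1 - ((k : ℝ) - 1 / 2) / n) * Real.log (1 - (k : ℝ) / n))

namespace Real

variable {x : ℝ}

theorem hasSum_mul_log_one_add_add_mul_log_one_sub (h : |x| < 1) :
    HasSum (fun k : ℕ => x ^ (2 * k + 2) / ((k + 1) * (2 * k + 1)))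
      ((1 + x) * log (1 + x) + (1 - x) * log (1 - x)) := by
  have hx2 : |x ^ 2| < 1 := by rwa [abs_pow, sq_lt_one_iff₀ (abs_nonneg x)]
  obtain ⟨hlt, hgt⟩ := abs_lt.mp h
  have hlog : log (1 + x) + log (1 - x) = log (1 - x ^ 2) := by
    rw [← log_mul (by linarith) (by linarith)]; ring_nf
  have hsplit : (1 + x) * log (1 + x) + (1 - x) * log (1 - x)
      = x * (log (1 + x) - log (1 - x)) - -log (1 - x ^ 2) := by
    rw [← hlog]; ring
  rw [hsplit]
  refine (((hasSum_log_sub_log_of_abs_lt_one h).mul_left x).sub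
    (hasSum_pow_div_log_of_abs_lt_one hx2)).congr_fun fun k => ?_
  field_simp
  ring

theorem hasSum_mul_log_one_add_add_mul_log_one_sub_sub_sq (h : |x| < 1) :
    HasSum (fun k : ℕ => x ^ (2 * k + 4) / ((k + 2) * (2 * k + 3)))
      ((1 + x) * log (1 + x) + (1 - x) * log (1 - x) - x ^ 2) := by
  have h1 := (hasSum_nat_add_iff' 1).mpr (hasSum_mul_log_one_add_add_mul_log_one_sub h)
  norm_num [Finset.sum_range_one] at h1
  refine h1.congr_fun fun k => ?_
  ring_nf

theorem sq_le_mul_log_one_add_add_mul_log_one_sub (h : |x| < 1) :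
    x ^ 2 ≤ (1 + x) * log (1 + x) + (1 - x) * log (1 - x) := by
  have := (hasSum_mul_log_one_add_add_mul_log_one_sub_sub_sq h).nonneg fun k => by
    rw [pow_add, pow_mul]; positivity
  linarith

theorem mul_log_one_add_add_mul_log_one_sub_sub_sq_le (h : |x| < 1) :
    (1 + x) * log (1 + x) + (1 - x) * log (1 - x) - x ^ 2 ≤ x ^ 4 / (6 * (1 - x ^ 2)) := by
  have hx2 : x ^ 2 < 1 := by rwa [sq_lt_one_iff_abs_lt_one]
  have hgeom := (hasSum_geometric_of_lt_one (sq_nonneg x) hx2).mul_left (x ^ 4 / 6)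
  rw [div_mul_eq_div_div, div_eq_mul_inv _ (1 - x ^ 2)]
  refine hasSum_le (fun k => ?_) (hasSum_mul_log_one_add_add_mul_log_one_sub_sub_sq h) hgeom
  rw [pow_add, pow_mul, mul_comm, div_mul_eq_mul_div]
  gcongr
  nlinarith [k.cast_nonneg (α := ℝ)]

theorem abs_log_one_add_sub_log_one_sub_le (h : |x| < 1) :
    |log (1 + x) - log (1 - x)| ≤ 2 * |x| / (1 - x ^ 2) := by
  have hx2 : x ^ 2 < 1 := by rwa [sq_lt_one_iff_abs_lt_one]
  have hgeom := (hasSum_geometric_of_lt_one (sq_nonneg x) hx2).mul_left (2 * |x|)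
  rw [← div_eq_mul_inv] at hgeom
  refine (hasSum_log_sub_log_of_abs_lt_one h).norm_le_of_bounded hgeom fun k => ?_
  have hcoeff : 1 / (2 * (k : ℝ) + 1) ≤ 1 := by
    rw [div_le_one (by positivity)]; linarith [k.cast_nonneg (α := ℝ)]
  rw [norm_eq_abs, abs_mul, abs_mul, abs_pow, pow_succ, pow_mul, sq_abs, abs_two,
    abs_of_pos (by positivity : (0 : ℝ) < 1 / (2 * k + 1))]
  calc 2 * (1 / (2 * (k : ℝ) + 1)) * ((x ^ 2) ^ k * |x|) ≤ 2 * 1 * ((x ^ 2) ^ k * |x|) := by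
        gcongr
    _ = 2 * |x| * (x ^ 2) ^ k := by ring

end Real

theorem bstar_sub_sq_div_eq (n : ℕ) (hn : 0 < n) (k : ℤ) :
    bstar n k - (k : ℝ) ^ 2 / n
      = n * ((1 + k / n) * log (1 + k / n) + (1 - k / n) * log (1 - k / n) - (k / n) ^ 2)
        - (log (1 + k / n) - log (1 - k / n)) / 2 := by
  rw [bstar]
  field_simp
  ring

theorem abs_bstar_sub_sq_div_le (n : ℕ) (hn : 0 < n) (k : ℤ) {t : ℝ}
    (hk : |(k : ℝ) / n| ≤ t) (ht : t < 1) :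
    |bstar n k - (k : ℝ) ^ 2 / n| ≤ (n * t ^ 4 / 6 + t) / (1 - t ^ 2) := by
  set x : ℝ := k / n
  have hx : |x| < 1 := hk.trans_lt ht
  have hxt : x ^ 2 ≤ t ^ 2 := sq_le_sq' (abs_le.mp hk).1 (abs_le.mp hk).2
  have hx4 : x ^ 4 ≤ t ^ 4 := by
    simpa only [← pow_mul] using pow_le_pow_left₀ (sq_nonneg x) hxt 2
  have ht2 : 0 < 1 - t ^ 2 := by nlinarith [abs_nonneg x]
  have hF := sub_nonneg.mpr (sq_le_mul_log_one_add_add_mul_log_one_sub hx)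
  have hL : |(log (1 + x) - log (1 - x)) / 2| ≤ |x| / (1 - x ^ 2) := by
    rw [abs_div, abs_two, div_le_iff₀ two_pos, mul_comm, ← mul_div_assoc]
    exact abs_log_one_add_sub_log_one_sub_le hx
  rw [bstar_sub_sq_div_eq n hn k]
  calc _ ≤ |n * ((1 + x) * log (1 + x) + (1 - x) * log (1 - x) - x ^ 2)|
        + |(log (1 + x) - log (1 - x)) / 2| := abs_sub _ _
    _ ≤ n * (x ^ 4 / (6 * (1 - x ^ 2))) + |x| / (1 - x ^ 2) := by
      rw [abs_of_nonneg (mul_nonneg n.cast_nonneg hF)]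
      gcongr
      exact mul_log_one_add_add_mul_log_one_sub_sub_sq_le hx
    _ ≤ n * (t ^ 4 / (6 * (1 - t ^ 2))) + t / (1 - t ^ 2) := by
      have : 0 ≤ t := (abs_nonneg x).trans hk
      gcongr
    _ = (n * t ^ 4 / 6 + t) / (1 - t ^ 2) := by field_simp

theorem stmt_18 (n : ℕ) (hn : 4 ≤ n) (k : ℤ) (hk : (|k| : ℝ) ≤ (n : ℝ) ^ ((2 : ℝ) / 3)) :
    |bstar n k - (k : ℝ) ^ 2 / n| < 2 * (n : ℝ) ^ (-(1 : ℝ) / 3) := by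
  have hn0 : (0 : ℝ) < n := by positivity
  have hn4 : (4 : ℝ) ≤ n := by exact_mod_cast hn
  set t := (n : ℝ) ^ (-(1 : ℝ) / 3)
  have ht : 0 < t := rpow_pos_of_pos hn0 _
  have hnt : (n : ℝ) * t ^ 3 = 1 := by
    rw [← rpow_natCast, ← rpow_mul hn0.le]
    norm_num [rpow_neg_one, hn0.ne']
  have hkt : |(k : ℝ) / n| ≤ t := by
    rw [abs_div, Nat.abs_cast, div_le_iff₀ hn0, mul_comm, ← rpow_one_add' hn0.le (by norm_num)]
    norm_num [hk]
  have ht2 : t ^ 2 < 5 / 12 := by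
    have ht6 : (t ^ 2) ^ 3 ≤ 1 / 16 := by nlinarith [pow_pos ht 3]
    by_contra! h
    linarith [pow_le_pow_left₀ (by norm_num) h 3]
  calc _ ≤ (n * t ^ 4 / 6 + t) / (1 - t ^ 2) :=
        abs_bstar_sub_sq_div_le n (by omega) k hkt (by nlinarith)
    _ < 2 * t := by
      rw [div_lt_iff₀ (by linarith)]
      nlinarith
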